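/- arXiv:cs/0408068 — 4 statements merged into one kernel-verified Lean document; each statement's English description precedes it below -/
import Mathlib

section
/- There exists a constant C > 0 (independent of b, o, and i) such that for all sufficiently large b > 1, for every index 0 ≤ i < L, and for all points q ∈ Q_i and u ∈ R_i, one has X(q,u) ≤ X(q̃_i, ũ_i) ≤ C/(b·(log b)³). -/
open MeasureTheory Real Set
open scoped ENNReal

noncomputable section

/-- The Euclidean plane ℝ². -/
abbrev Plane := EuclideanSpace ℝ (Fin 2)

/-- The point in the plane with Cartesian coordinates `(x, y)`. -/
def pt (x y : ℝ) : Plane := (WithLp.equiv 2 (Fin 2 → ℝ)).symm ![x, y]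

/-- `D p r` is the closed disk of radius `r` centered at `p`. -/
def D (p : Plane) (r : ℝ) : Set Plane := Metric.closedBall p r

/-- `X o q u` is the area of `D₁(o) \ (D₁(q) ∪ D₁(u))` (Lebesgue measure). -/
def X (o q u : Plane) : ℝ := (volume (D o 1 \ (D q 1 ∪ D u 1))).toReal

/-- `L = ⌊b^(1/3) (log b)²⌋`. -/
def L (b : ℝ) : ℕ := ⌊b ^ (1/3 : ℝ) * (Real.log b) ^ 2⌋₊

/-- `δ = 1/(b^(1/3) log b)`. -/
def δ (b : ℝ) : ℝ := 1 / (b ^ (1/3 : ℝ) * Real.log b)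

/-- `θb = π / L`. -/
def θb (b : ℝ) : ℝ := Real.pi / L b

/-- The point with polar coordinates `(r, θ)` relative to `o`. -/
def polarPt (o : Plane) (r θ : ℝ) : Plane := o + r • pt (Real.cos θ) (Real.sin θ)

/-- The sector `Q_i` of the disk `D_δ(o)`: points with polar coordinates `(r, θ)` relative
to `o` satisfying `0 < r ≤ δ` and `(i - 1/2)θ_b ≤ θ ≤ (i + 1/2)θ_b`. -/
def Qsector (o : Plane) (b : ℝ) (i : ℕ) : Set Plane :=
  {p | ∃ r θ : ℝ, 0 < r ∧ r ≤ δ b ∧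
    ((i : ℝ) - 1/2) * θb b ≤ θ ∧ θ ≤ ((i : ℝ) + 1/2) * θb b ∧ p = polarPt o r θ}

/-- The sector `R_i`, the reflection of `Q_i` through `o`: points with polar coordinates
`(r, θ)` relative to `o` satisfying `0 < r ≤ δ` and `(i - 1/2)θ_b ≤ θ - π ≤ (i + 1/2)θ_b`. -/
def Rsector (o : Plane) (b : ℝ) (i : ℕ) : Set Plane :=
  {p | ∃ r θ : ℝ, 0 < r ∧ r ≤ δ b ∧
    ((i : ℝ) - 1/2) * θb b ≤ θ - Real.pi ∧ θ - Real.pi ≤ ((i : ℝ) + 1/2) * θb b ∧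
    p = polarPt o r θ}

/-- The extreme point `q̃_i`, with polar coordinates `(δ, (i - 1/2)θ_b)` relative to `o`. -/
def qtil (o : Plane) (b : ℝ) (i : ℕ) : Plane := polarPt o (δ b) (((i : ℝ) - 1/2) * θb b)

/-- The extreme point `ũ_i`, with polar coordinates `(δ, (i + 1/2)θ_b + π)` relative to `o`. -/
def util (o : Plane) (b : ℝ) (i : ℕ) : Plane :=
  polarPt o (δ b) (((i : ℝ) + 1/2) * θb b + Real.pi)

set_option maxHeartbeats 4000000

namespace R2Aux


@[simp] lemma pt_apply_zero (a b : ℝ) : pt a b 0 = a := by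
  simp [pt]

@[simp] lemma pt_apply_one (a b : ℝ) : pt a b 1 = b := by
  simp [pt]

lemma norm_sq_eq (x : Plane) : ‖x‖ ^ 2 = x 0 ^ 2 + x 1 ^ 2 := by
  rw [EuclideanSpace.norm_eq]
  rw [Real.sq_sqrt (by positivity)]
  simp [Fin.sum_univ_two, sq_abs]

lemma norm_le_one_iff (x : Plane) : ‖x‖ ≤ 1 ↔ x 0 ^ 2 + x 1 ^ 2 ≤ 1 := by
  constructor <;> intro h
  · nlinarith [norm_sq_eq x, norm_nonneg x]
  · nlinarith [norm_sq_eq x, norm_nonneg x]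

lemma one_lt_norm_iff (x : Plane) : 1 < ‖x‖ ↔ 1 < x 0 ^ 2 + x 1 ^ 2 := by
  constructor <;> intro h
  · nlinarith [norm_sq_eq x, norm_nonneg x]
  · nlinarith [norm_sq_eq x, norm_nonneg x]

/-- unit direction vector -/
def dir (η : ℝ) : Plane := pt (Real.cos η) (Real.sin η)

@[simp] lemma dir_apply_zero (η : ℝ) : dir η 0 = Real.cos η := by simp [dir]
@[simp] lemma dir_apply_one (η : ℝ) : dir η 1 = Real.sin η := by simp [dir]

lemma norm_dir (η : ℝ) : ‖dir η‖ = 1 := by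
  have h := norm_sq_eq (dir η)
  simp only [dir_apply_zero, dir_apply_one] at h
  nlinarith [norm_nonneg (dir η), Real.sin_sq_add_cos_sq η]

/-- rotation by angle η as a linear map -/
def rotL (η : ℝ) : Plane →ₗ[ℝ] Plane where
  toFun x := pt (Real.cos η * x 0 - Real.sin η * x 1) (Real.sin η * x 0 + Real.cos η * x 1)
  map_add' x y := by
    ext i
    fin_cases i <;> simp [PiLp.add_apply] <;> ring
  map_smul' r x := by
    ext i
    fin_cases i <;> simp [PiLp.smul_apply, smul_eq_mul] <;> ring

@[simp] lemma rotL_apply_zero (η : ℝ) (x : Plane) :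
    rotL η x 0 = Real.cos η * x 0 - Real.sin η * x 1 := by simp [rotL]
@[simp] lemma rotL_apply_one (η : ℝ) (x : Plane) :
    rotL η x 1 = Real.sin η * x 0 + Real.cos η * x 1 := by simp [rotL]

/-- rotation by angle η as a linear isometry equivalence -/
def rot (η : ℝ) : Plane ≃ₗᵢ[ℝ] Plane :=
  { rotL η with
    invFun := rotL (-η)
    left_inv := by
      intro x
      ext i
      fin_cases i
      · simp [Real.cos_neg, Real.sin_neg]
        linear_combination (x 0) * Real.sin_sq_add_cos_sq η
      · simp [Real.cos_neg, Real.sin_neg]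
        linear_combination (x 1) * Real.sin_sq_add_cos_sq η
    right_inv := by
      intro x
      ext i
      fin_cases i
      · simp [Real.cos_neg, Real.sin_neg]
        linear_combination (x 0) * Real.sin_sq_add_cos_sq η
      · simp [Real.cos_neg, Real.sin_neg]
        linear_combination (x 1) * Real.sin_sq_add_cos_sq η
    norm_map' := by
      intro x
      show ‖rotL η x‖ = ‖x‖
      have h1 := norm_sq_eq (rotL η x)
      have h2 := norm_sq_eq x
      simp only [rotL_apply_zero, rotL_apply_one] at h1
      nlinarith [norm_nonneg (rotL η x), norm_nonneg x, Real.sin_sq_add_cos_sq η] }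

lemma coe_rot (η : ℝ) : ⇑(rot η) = ⇑(rotL η) := rfl

@[simp] lemma rot_apply_zero (η : ℝ) (x : Plane) :
    rot η x 0 = Real.cos η * x 0 - Real.sin η * x 1 := by rw [coe_rot, rotL_apply_zero]
@[simp] lemma rot_apply_one (η : ℝ) (x : Plane) :
    rot η x 1 = Real.sin η * x 0 + Real.cos η * x 1 := by rw [coe_rot, rotL_apply_one]

lemma rot_dir (η A : ℝ) : rot η (dir A) = dir (A + η) := by
  ext i
  fin_cases i <;>
    simp [Real.cos_add, Real.sin_add] <;> ring


/-- direction periodicity -/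
lemma dir_add_two_pi (x : ℝ) : dir (x + 2*π) = dir x := by
  ext i
  fin_cases i <;> simp [Real.cos_add_two_pi, Real.sin_add_two_pi]

/-- the key set: unit disk at origin minus two unit disks -/
def USET (a b : Plane) : Set Plane := {x | ‖x‖ ≤ 1 ∧ 1 < ‖x - a‖ ∧ 1 < ‖x - b‖}

lemma USET_comm (a b : Plane) : USET a b = USET b a := by
  ext x; simp [USET]; tauto

lemma measurableSet_USET (a b : Plane) : MeasurableSet (USET a b) := by
  have h1 : MeasurableSet {x : Plane | ‖x‖ ≤ 1} :=
    measurableSet_le (by fun_prop) measurable_const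
  have h2 : MeasurableSet {x : Plane | 1 < ‖x - a‖} :=
    measurableSet_lt measurable_const (by fun_prop)
  have h3 : MeasurableSet {x : Plane | 1 < ‖x - b‖} :=
    measurableSet_lt measurable_const (by fun_prop)
  exact (h1.inter (h2.inter h3))

lemma USET_subset_ball (a b : Plane) : USET a b ⊆ Metric.closedBall 0 1 := by
  intro x hx
  simpa [Metric.mem_closedBall, dist_eq_norm] using hx.1

lemma vol_USET_ne_top (a b : Plane) : volume (USET a b) ≠ ⊤ :=
  ((measure_mono (USET_subset_ball a b)).trans_lt (measure_closedBall_lt_top)).ne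

/-- translation: the actual diff-set has the same volume as a centered USET -/
lemma vol_diff_eq (o q u : Plane) :
    volume (D o 1 \ (D q 1 ∪ D u 1)) = volume (USET (q - o) (u - o)) := by
  have hmeas : MeasurableSet (D o 1 \ (D q 1 ∪ D u 1)) := by
    have h1 : MeasurableSet (D o 1) := measurableSet_closedBall
    have h2 : MeasurableSet (D q 1) := measurableSet_closedBall
    have h3 : MeasurableSet (D u 1) := measurableSet_closedBall
    exact h1.diff (h2.union h3)
  have hpre : (fun x : Plane => x + o) ⁻¹' (D o 1 \ (D q 1 ∪ D u 1)) = USET (q - o) (u - o) := by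
    ext x
    have e0 : x + o - o = x := by abel
    have e1 : x + o - q = x - (q - o) := by abel
    have e2 : x + o - u = x - (u - o) := by abel
    simp only [Set.mem_preimage, Set.mem_diff, Set.mem_union, D, Metric.mem_closedBall,
      dist_eq_norm, e0, e1, e2, USET, Set.mem_setOf_eq, not_or, not_le]
  rw [← hpre, (measurePreserving_add_right volume o).measure_preimage hmeas.nullMeasurableSet]

/-- rotating both centers preserves the volume -/
lemma vol_USET_rot (a b : Plane) (η : ℝ) :
    volume (USET (rot η a) (rot η b)) = volume (USET a b) := by
  have hpre : ⇑(rot η) ⁻¹' (USET (rot η a) (rot η b)) = USET a b := by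
    ext x
    have e1 : rot η x - rot η a = rot η (x - a) := ((rot η).toLinearEquiv.map_sub x a).symm
    have e2 : rot η x - rot η b = rot η (x - b) := ((rot η).toLinearEquiv.map_sub x b).symm
    simp only [Set.mem_preimage, USET, Set.mem_setOf_eq, e1, e2,
      (rot η).norm_map]
  rw [← hpre,
    ((rot η).measurePreserving).measure_preimage (measurableSet_USET _ _).nullMeasurableSet]

lemma vol_USET_rot_dir (δ' A B η : ℝ) :
    volume (USET (δ' • dir A) (δ' • dir B)) =
      volume (USET (δ' • dir (A + η)) (δ' • dir (B + η))) := by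
  have h := vol_USET_rot (δ' • dir A) (δ' • dir B) η
  rw [(rot η).map_smul, (rot η).map_smul, rot_dir, rot_dir] at h
  exact h.symm


lemma coreG {d c s x0 x1 : ℝ}
    (hd0 : 0 < d) (hd : d ≤ 1/10)
    (hcs : c^2 + s^2 = 1) (hs0 : 0 ≤ s) (hs : s ≤ d/2) (hc9 : 9/10 ≤ c)
    (hball : x0^2 + x1^2 ≤ 1)
    (hq : 1 < (x0 - d*c)^2 + (x1 + d*s)^2)
    (hu : 1 < (x0 + d*c)^2 + (x1 + d*s)^2) :
    |x0| ≤ 5/4*d ∧ 1 - 6*d^2 ≤ x1^2 := by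
  have hd2 : d^2*(c^2+s^2) = d^2 := by rw [hcs]; ring
  have h1' : 2*d*(c*x0 - s*x1) < d^2 := by nlinarith [hq, hball, hd2]
  have h2' : -(d^2) < 2*d*(c*x0 + s*x1) := by nlinarith [hu, hball, hd2]
  have h1 : c*x0 - s*x1 < d/2 :=
    lt_of_mul_lt_mul_left (by nlinarith : (2*d)*(c*x0 - s*x1) < (2*d)*(d/2)) (by linarith)
  have h2 : -(d/2) < c*x0 + s*x1 := by
    have := lt_of_mul_lt_mul_left
      (by nlinarith : (2*d)*(-(d/2)) < (2*d)*(c*x0 + s*x1)) (by linarith : (0:ℝ) ≤ 2*d)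
    linarith
  have hx1a : x1 ≤ 1 := by nlinarith
  have hx1b : -1 ≤ x1 := by nlinarith
  have hcx0u : c*x0 < d := by nlinarith
  have hcx0l : -d < c*x0 := by nlinarith
  have hx0u : x0 ≤ 5/4*d := by
    by_contra h
    push_neg at h
    have h0 : (0:ℝ) < x0 := by nlinarith
    nlinarith [mul_le_mul_of_nonneg_right hc9 h0.le]
  have hx0l : -(5/4*d) ≤ x0 := by
    by_contra h
    push_neg at h
    have h0 : x0 < 0 := by nlinarith
    nlinarith [mul_le_mul_of_nonneg_right hc9 (by linarith : (0:ℝ) ≤ -x0)]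
  refine ⟨abs_le.2 ⟨hx0l, hx0u⟩, ?_⟩
  have h3 : c*x0 + s*x1 < 3/2*d := by nlinarith
  have h4 : 1 - 4*d^2 < x0^2 + x1^2 := by nlinarith [hu, hd2]
  nlinarith

lemma coreL0 {d c s C S x0 x1 : ℝ}
    (hd0 : 0 < d) (hd : d ≤ 1/10)
    (hcs : c^2 + s^2 = 1) (hCS : C^2 + S^2 = 1)
    (hs0 : 0 ≤ s) (hS0 : 0 ≤ S) (hs : s ≤ d/2) (hS : S ≤ d/2)
    (hsS : s ≤ S) (hCc : C ≤ c) (hc1 : c ≤ 1) (hC1 : C ≤ 1)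
    (hc9 : 9/10 ≤ c) (hC9 : 9/10 ≤ C)
    (hball : x0^2 + x1^2 ≤ 1)
    (hq : 1 < (x0 - d*c)^2 + (x1 + d*s)^2)
    (hu : 1 < (x0 + d*c)^2 + (x1 + d*s)^2)
    (hx1 : 0 ≤ x1) :
    1 < (x0 - d*C)^2 + (x1 + d*S)^2 ∧ 1 < (x0 + d*C)^2 + (x1 + d*S)^2 := by
  obtain ⟨hx0, hx12⟩ := coreG hd0 hd hcs hs0 hs hc9 hball hq hu
  have hx0' := abs_le.1 hx0
  have hx19 : 9/10 ≤ x1 := by nlinarith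
  have hcC : (0:ℝ) < c + C := by linarith
  have hprod1 : 0 ≤ (x0 + 5/4*d) * (S + s) := mul_nonneg (by linarith) (by linarith)
  have hprod2 : 0 ≤ (5/4*d - x0) * (S + s) := mul_nonneg (by linarith) (by linarith)
  have hprod3 : (9/10)*(9/5) ≤ x1*(c+C) := by nlinarith
  have hin1 : 0 ≤ x0*(S+s) + x1*(c+C) := by nlinarith
  have hin2 : 0 ≤ x1*(c+C) - x0*(S+s) := by nlinarith
  have hbr1 : 0 ≤ x0*(c-C) + x1*(S-s) := by
    have e : (c+C)*(x0*(c-C)+x1*(S-s)) = (S-s)*(x0*(S+s)+x1*(c+C)) := by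
      linear_combination x0*hcs - x0*hCS
    have h1 : 0 ≤ (S-s)*(x0*(S+s)+x1*(c+C)) := mul_nonneg (by linarith) hin1
    exact nonneg_of_mul_nonneg_right (by rw [e]; exact h1) hcC
  have hbr2 : 0 ≤ x0*(C-c) + x1*(S-s) := by
    have e : (c+C)*(x0*(C-c)+x1*(S-s)) = (S-s)*(x1*(c+C) - x0*(S+s)) := by
      linear_combination x0*hCS - x0*hcs
    have h1 : 0 ≤ (S-s)*(x1*(c+C) - x0*(S+s)) := mul_nonneg (by linarith) hin2
    exact nonneg_of_mul_nonneg_right (by rw [e]; exact h1) hcC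
  constructor
  · have e : (x0 - d*C)^2 + (x1 + d*S)^2
        = (x0 - d*c)^2 + (x1 + d*s)^2 + 2*d*(x0*(c - C) + x1*(S - s)) := by
      linear_combination d^2*hCS - d^2*hcs
    nlinarith [mul_nonneg (by linarith : (0:ℝ) ≤ 2*d) hbr1]
  · have e : (x0 + d*C)^2 + (x1 + d*S)^2
        = (x0 + d*c)^2 + (x1 + d*s)^2 + 2*d*(x0*(C - c) + x1*(S - s)) := by
      linear_combination d^2*hCS - d^2*hcs
    nlinarith [mul_nonneg (by linarith : (0:ℝ) ≤ 2*d) hbr2]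


lemma coreL1 {d c s C S x0 x1 x0' x1' : ℝ}
    (hd0 : 0 < d) (hd : d ≤ 1/10)
    (hcs : c^2 + s^2 = 1) (hCS : C^2 + S^2 = 1)
    (hs0 : 0 ≤ s) (hS0 : 0 ≤ S) (hs : s ≤ d/2) (hS : S ≤ d/2)
    (hc1 : c ≤ 1) (hC1 : C ≤ 1) (hc9 : 9/10 ≤ c) (hC9 : 9/10 ≤ C)
    (hz0 : x0' = -(C*c - S*s)*x0 - (S*c + C*s)*x1)
    (hz1 : x1' = (S*c + C*s)*x0 - (C*c - S*s)*x1)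
    (hball : x0^2 + x1^2 ≤ 1)
    (hq : 1 < (x0 - d*c)^2 + (x1 + d*s)^2)
    (hu : 1 < (x0 + d*c)^2 + (x1 + d*s)^2)
    (hx1 : x1 < 0)
    (hcu : (x0 + d*C)^2 + (x1 + d*S)^2 ≤ 1) :
    x0'^2 + x1'^2 ≤ 1 ∧
    (1 < (x0' - d*C)^2 + (x1' + d*S)^2 ∧ 1 < (x0' + d*C)^2 + (x1' + d*S)^2) ∧
    (x0' - d*c)^2 + (x1' + d*s)^2 ≤ 1 ∧
    0 < x1' := by
  obtain ⟨hx0, hx12⟩ := coreG hd0 hd hcs hs0 hs hc9 hball hq hu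
  have hx0' := abs_le.1 hx0
  have hx19 : x1 ≤ -(9/10) := by nlinarith
  have hQ0 : 0 ≤ S*c + C*s := by nlinarith
  have hQd : S*c + C*s ≤ d := by nlinarith
  have hP8 : 4/5 ≤ C*c - S*s := by nlinarith
  have hP1 : C*c - S*s ≤ 1 := by nlinarith
  subst hz0 hz1
  refine ⟨?_, ⟨?_, ?_⟩, ?_, ?_⟩
  · have e : (-(C*c - S*s)*x0 - (S*c + C*s)*x1)^2 + ((S*c + C*s)*x0 - (C*c - S*s)*x1)^2
        = x0^2 + x1^2 := by
      linear_combination ((c^2+s^2)*(x0^2+x1^2))*hCS + (x0^2+x1^2)*hcs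
    linarith [e.le, hball]
  · have e : (-(C*c - S*s)*x0 - (S*c + C*s)*x1 - d*C)^2
        + ((S*c + C*s)*x0 - (C*c - S*s)*x1 + d*S)^2
        = (x0 + d*c)^2 + (x1 + d*s)^2 := by
      linear_combination ((c^2+s^2)*(x0^2+x1^2) + 2*d*(c*x0+s*x1) + d^2)*hCS
        + ((x0^2+x1^2) - d^2)*hcs
    linarith [e, hu]
  · have e : (-(C*c - S*s)*x0 - (S*c + C*s)*x1 + d*C)^2
        + ((S*c + C*s)*x0 - (C*c - S*s)*x1 + d*S)^2
        = (x0 - d*c)^2 + (x1 + d*s)^2 + 4*d*(S*c + C*s)*(S*x0 - C*x1) := by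
      linear_combination ((c^2+s^2)*(x0^2+x1^2) + 2*d*(s*x1-c*x0) + d^2)*hCS
        + ((x0^2+x1^2) - d^2)*hcs
    have hpos : 0 ≤ 4*d*(S*c + C*s)*(S*x0 - C*x1) := by
      have h1 : 0 ≤ S*x0 - C*x1 := by nlinarith
      have h2 : 0 ≤ 4*d*(S*c + C*s) := by positivity
      exact mul_nonneg h2 h1
    nlinarith [e, hq]
  · have e : (-(C*c - S*s)*x0 - (S*c + C*s)*x1 - d*c)^2
        + ((S*c + C*s)*x0 - (C*c - S*s)*x1 + d*s)^2
        = (x0 + d*C)^2 + (x1 + d*S)^2 := by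
      linear_combination ((c^2+s^2)*(x0^2+x1^2) - d^2)*hCS
        + ((x0^2+x1^2) + 2*d*(C*x0+S*x1) + d^2)*hcs
    linarith [e.le, hcu]
  · have hA : (4/5)*(9/10) ≤ (C*c - S*s)*(-x1) :=
      mul_le_mul hP8 (by linarith) (by norm_num) (by linarith)
    have hB : -(d*(5/4*d)) ≤ (S*c + C*s)*x0 := by
      have t1 : 0 ≤ (S*c + C*s)*(x0 + 5/4*d) := mul_nonneg hQ0 (by linarith [hx0'.1])
      have t2 : (S*c + C*s)*(5/4*d) ≤ d*(5/4*d) :=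
        mul_le_mul_of_nonneg_right hQd (by positivity)
      nlinarith
    nlinarith

lemma coreL2 {d c s C S x0 x1 x0' x1' : ℝ}
    (hd0 : 0 < d) (hd : d ≤ 1/10)
    (hcs : c^2 + s^2 = 1) (hCS : C^2 + S^2 = 1)
    (hs0 : 0 ≤ s) (hS0 : 0 ≤ S) (hs : s ≤ d/2) (hS : S ≤ d/2)
    (hsS : s ≤ S) (hCc : C ≤ c)
    (hc1 : c ≤ 1) (hC1 : C ≤ 1) (hc9 : 9/10 ≤ c) (hC9 : 9/10 ≤ C)
    (hz0 : x0' = -(C*c - S*s)*x0 + (S*c + C*s)*x1)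
    (hz1 : x1' = -(S*c + C*s)*x0 - (C*c - S*s)*x1)
    (hball : x0^2 + x1^2 ≤ 1)
    (hq : 1 < (x0 - d*c)^2 + (x1 + d*s)^2)
    (hu : 1 < (x0 + d*c)^2 + (x1 + d*s)^2)
    (hx1 : x1 < 0)
    (hcq : (x0 - d*C)^2 + (x1 + d*S)^2 ≤ 1) :
    x0'^2 + x1'^2 ≤ 1 ∧
    (1 < (x0' - d*C)^2 + (x1' + d*S)^2 ∧ 1 < (x0' + d*C)^2 + (x1' + d*S)^2) ∧
    (x0' + d*c)^2 + (x1' + d*s)^2 ≤ 1 ∧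
    1 < (x0' - d*c)^2 + (x1' + d*s)^2 ∧
    0 < x1' := by
  obtain ⟨hx0, hx12⟩ := coreG hd0 hd hcs hs0 hs hc9 hball hq hu
  have hx0' := abs_le.1 hx0
  have hx19 : x1 ≤ -(9/10) := by nlinarith
  have hQ0 : 0 ≤ S*c + C*s := by nlinarith
  have hQd : S*c + C*s ≤ d := by nlinarith
  have hP8 : 4/5 ≤ C*c - S*s := by nlinarith
  have hP1 : C*c - S*s ≤ 1 := by nlinarith
  have hkey : (c - C) * (c + C) = (S - s) * (S + s) := by linear_combination hcs - hCS
  have hcmC : c - C ≤ (5/9)*d*S := by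
    have h1 : (c - C)*(18/10) ≤ (c - C)*(c + C) := by nlinarith
    have h2 : (S - s)*(S + s) ≤ S*d := by nlinarith
    linarith
  subst hz0 hz1
  refine ⟨?_, ⟨?_, ?_⟩, ?_, ?_, ?_⟩
  · have e : (-(C*c - S*s)*x0 + (S*c + C*s)*x1)^2 + (-(S*c + C*s)*x0 - (C*c - S*s)*x1)^2
        = x0^2 + x1^2 := by
      linear_combination ((c^2+s^2)*(x0^2+x1^2))*hCS + (x0^2+x1^2)*hcs
    linarith [e.le, hball]
  · -- uncovered by qtil, with nonneg remainder -4dQ(Sx0+Cx1)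
    have e : (-(C*c - S*s)*x0 + (S*c + C*s)*x1 - d*C)^2
        + (-(S*c + C*s)*x0 - (C*c - S*s)*x1 + d*S)^2
        = (x0 + d*c)^2 + (x1 + d*s)^2 - 4*d*(S*c + C*s)*(S*x0 + C*x1) := by
      linear_combination ((c^2+s^2)*(x0^2+x1^2) + 2*d*(c*x0+s*x1) + d^2)*hCS
        + ((x0^2+x1^2) - d^2)*hcs
    have hneg : S*x0 + C*x1 ≤ 0 := by nlinarith
    have hpos : 0 ≤ -(4*d*(S*c + C*s)*(S*x0 + C*x1)) := by
      rw [neg_nonneg ]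
      exact mul_nonpos_of_nonneg_of_nonpos (by positivity) hneg
    nlinarith [e, hu]
  · -- uncovered by util: exact from hq
    have e : (-(C*c - S*s)*x0 + (S*c + C*s)*x1 + d*C)^2
        + (-(S*c + C*s)*x0 - (C*c - S*s)*x1 + d*S)^2
        = (x0 - d*c)^2 + (x1 + d*s)^2 := by
      linear_combination ((c^2+s^2)*(x0^2+x1^2) + 2*d*(s*x1-c*x0) + d^2)*hCS
        + ((x0^2+x1^2) - d^2)*hcs
    linarith [e, hq]
  · -- covered by u_gamma: exact from hcq
    have e : (-(C*c - S*s)*x0 + (S*c + C*s)*x1 + d*c)^2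
        + (-(S*c + C*s)*x0 - (C*c - S*s)*x1 + d*s)^2
        = (x0 - d*C)^2 + (x1 + d*S)^2 := by
      linear_combination ((c^2+s^2)*(x0^2+x1^2) - d^2)*hCS
        + ((x0^2+x1^2) + 2*d*(S*x1-C*x0) + d^2)*hcs
    linarith [e.le, hcq]
  · -- uncovered by q_gamma: from hu with Xi ≥ 0
    have e : (-(C*c - S*s)*x0 + (S*c + C*s)*x1 - d*c)^2
        + (-(S*c + C*s)*x0 - (C*c - S*s)*x1 + d*s)^2
        = (x0 + d*c)^2 + (x1 + d*s)^2
          + 2*d*(-(x0*((c-C)+2*s*(S*c + C*s))) - x1*(S+s+2*s*(C*c - S*s))) := by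
      linear_combination ((c^2+s^2)*(x0^2+x1^2))*hCS
        + ((x0^2+x1^2) + 2*d*(C*x0-S*x1))*hcs
    have hXi : 0 ≤ -(x0*((c-C)+2*s*(S*c + C*s))) - x1*(S+s+2*s*(C*c - S*s)) := by
      have hb1 : x0*(c-C) ≤ (5/4*d)*((5/9)*d*S) := by
        nlinarith [mul_le_mul_of_nonneg_left hcmC (abs_nonneg x0)]
      have hb2 : x0*(2*s*(S*c + C*s)) ≤ (5/4*d)*(2*s*d) := by
        have t1 : 0 ≤ (5/4*d - x0)*(2*s*(S*c+C*s)) :=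
          mul_nonneg (by linarith [hx0'.2]) (by positivity)
        have t2 : 0 ≤ (5/4*d)*(2*s*d - 2*s*(S*c+C*s)) :=
          mul_nonneg (by positivity) (by nlinarith)
        nlinarith
      have hb3 : -(x1*(S+s+2*s*(C*c - S*s))) ≥ (9/10)*(S+s+2*s*(4/5)) := by
        have t3 : 0 ≤ (-x1 - 9/10)*(S+s+2*s*(C*c - S*s)) :=
          mul_nonneg (by linarith) (by nlinarith)
        have t4 : 0 ≤ (9/10)*(2*s)*((C*c - S*s) - 4/5) :=
          mul_nonneg (by positivity) (by linarith)
        nlinarith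
      nlinarith
    nlinarith [e, hu, mul_nonneg (by linarith : (0:ℝ) ≤ 2*d) hXi]
  · have hA : (4/5)*(9/10) ≤ (C*c - S*s)*(-x1) :=
      mul_le_mul hP8 (by linarith) (by norm_num) (by linarith)
    have hB : (S*c + C*s)*x0 ≤ d*(5/4*d) := by
      have t1 : 0 ≤ (S*c + C*s)*(5/4*d - x0) := mul_nonneg hQ0 (by linarith [hx0'.2])
      have t2 : (S*c + C*s)*(5/4*d) ≤ d*(5/4*d) :=
        mul_le_mul_of_nonneg_right hQd (by positivity)
      nlinarith
    nlinarith


-- membership in the symmetric configuration set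
lemma mem_USET_sym_iff (dl w : ℝ) (x : Plane) :
    x ∈ USET (dl • dir (-(w/2))) (dl • dir (w/2 + π)) ↔
      (x 0^2 + x 1^2 ≤ 1 ∧
       1 < (x 0 - dl*Real.cos (w/2))^2 + (x 1 + dl*Real.sin (w/2))^2 ∧
       1 < (x 0 + dl*Real.cos (w/2))^2 + (x 1 + dl*Real.sin (w/2))^2) := by
  have e1 : (x - dl • dir (-(w/2))) 0 = x 0 - dl * Real.cos (w/2) := by
    simp [PiLp.sub_apply, PiLp.smul_apply, smul_eq_mul, Real.cos_neg]
  have e2 : (x - dl • dir (-(w/2))) 1 = x 1 + dl * Real.sin (w/2) := by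
    simp [PiLp.sub_apply, PiLp.smul_apply, smul_eq_mul, Real.sin_neg]
  have e3 : (x - dl • dir (w/2 + π)) 0 = x 0 + dl * Real.cos (w/2) := by
    simp [PiLp.sub_apply, PiLp.smul_apply, smul_eq_mul, Real.cos_add_pi]
  have e4 : (x - dl • dir (w/2 + π)) 1 = x 1 + dl * Real.sin (w/2) := by
    simp [PiLp.sub_apply, PiLp.smul_apply, smul_eq_mul, Real.sin_add_pi]
  unfold USET
  rw [Set.mem_setOf_eq, norm_le_one_iff, one_lt_norm_iff, one_lt_norm_iff, e1, e2, e3, e4]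

lemma main_vol {dl Θ γ : ℝ} (hΘ0 : 0 < Θ) (hΘd : Θ ≤ dl) (hdl : dl ≤ 1/10)
    (hγ0 : 0 ≤ γ) (hγΘ : γ ≤ Θ) :
    volume (USET (dl • dir (-(γ/2))) (dl • dir (γ/2 + π))) ≤
      volume (USET (dl • dir (-(Θ/2))) (dl • dir (Θ/2 + π))) := by
  have hd0 : 0 < dl := lt_of_lt_of_le hΘ0 hΘd
  set c := Real.cos (γ/2) with hc_def
  set s := Real.sin (γ/2) with hs_def
  set C := Real.cos (Θ/2) with hC_def
  set S := Real.sin (Θ/2) with hS_def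
  -- trig facts
  have hγπ : γ/2 ≤ π/2 := by nlinarith [Real.pi_gt_three]
  have hΘπ : Θ/2 ≤ π/2 := by nlinarith [Real.pi_gt_three]
  have hcs : c^2 + s^2 = 1 := by rw [hc_def, hs_def]; exact Real.cos_sq_add_sin_sq _
  have hCS : C^2 + S^2 = 1 := by rw [hC_def, hS_def]; exact Real.cos_sq_add_sin_sq _
  have hs0 : 0 ≤ s := Real.sin_nonneg_of_nonneg_of_le_pi (by linarith)
    (by linarith [Real.pi_gt_three])
  have hS0 : 0 ≤ S := Real.sin_nonneg_of_nonneg_of_le_pi (by linarith)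
    (by linarith [Real.pi_gt_three])
  have hs_half : s ≤ dl/2 := le_trans (Real.sin_le (by linarith)) (by linarith)
  have hS_half : S ≤ dl/2 := le_trans (Real.sin_le (by linarith)) (by linarith)
  have hsS : s ≤ S := by
    rw [hs_def, hS_def]
    apply Real.strictMonoOn_sin.monotoneOn ⟨by linarith, by linarith⟩
      ⟨by linarith, by linarith⟩ (by linarith)
  have hCc : C ≤ c := by
    rw [hc_def, hC_def]
    apply Real.strictAntiOn_cos.antitoneOn ⟨by linarith, by linarith [Real.pi_gt_three]⟩
      ⟨by linarith, by linarith [Real.pi_gt_three]⟩ (by linarith)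
  have hc1 : c ≤ 1 := Real.cos_le_one _
  have hC1 : C ≤ 1 := Real.cos_le_one _
  have hC9 : 9/10 ≤ C := by
    have := Real.one_sub_sq_div_two_le_cos (x := Θ/2)
    rw [← hC_def] at this
    nlinarith
  have hc9 : 9/10 ≤ c := by
    have := Real.one_sub_sq_div_two_le_cos (x := γ/2)
    rw [← hc_def] at this
    nlinarith
  -- the rotation angles
  set w1 := π - (Θ+γ)/2 with hw1_def
  set w2 := (Θ+γ)/2 + π with hw2_def
  have hw1c : Real.cos w1 = -(C*c - S*s) := by
    rw [hw1_def, Real.cos_pi_sub, show (Θ+γ)/2 = Θ/2 + γ/2 by ring, Real.cos_add]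
  have hw1s : Real.sin w1 = S*c + C*s := by
    rw [hw1_def, Real.sin_pi_sub, show (Θ+γ)/2 = Θ/2 + γ/2 by ring, Real.sin_add]
  have hw2c : Real.cos w2 = -(C*c - S*s) := by
    rw [hw2_def, Real.cos_add_pi, show (Θ+γ)/2 = Θ/2 + γ/2 by ring, Real.cos_add]
  have hw2s : Real.sin w2 = -(S*c + C*s) := by
    rw [hw2_def, Real.sin_add_pi, show (Θ+γ)/2 = Θ/2 + γ/2 by ring, Real.sin_add]
  -- sets
  set Vg := USET (dl • dir (-(γ/2))) (dl • dir (γ/2 + π)) with hVg_def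
  set VT := USET (dl • dir (-(Θ/2))) (dl • dir (Θ/2 + π)) with hVT_def
  have hmemVg : ∀ x : Plane, x ∈ Vg ↔
      (x 0^2 + x 1^2 ≤ 1 ∧
       1 < (x 0 - dl*c)^2 + (x 1 + dl*s)^2 ∧
       1 < (x 0 + dl*c)^2 + (x 1 + dl*s)^2) := fun x => mem_USET_sym_iff dl γ x
  have hmemVT : ∀ x : Plane, x ∈ VT ↔
      (x 0^2 + x 1^2 ≤ 1 ∧
       1 < (x 0 - dl*C)^2 + (x 1 + dl*S)^2 ∧
       1 < (x 0 + dl*C)^2 + (x 1 + dl*S)^2) := fun x => mem_USET_sym_iff dl Θ x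
  set covq : Set Plane := {x | (x 0 - dl*C)^2 + (x 1 + dl*S)^2 ≤ 1} with hcovq_def
  set covu : Set Plane := {x | (x 0 + dl*C)^2 + (x 1 + dl*S)^2 ≤ 1} with hcovu_def
  have hcovq_m : MeasurableSet covq := by
    apply measurableSet_le _ measurable_const
    exact (((by fun_prop : Measurable fun x : Plane => x 0).sub measurable_const).pow measurable_const).add
      (((by fun_prop : Measurable fun x : Plane => x 1).add measurable_const).pow measurable_const)
  have hcovu_m : MeasurableSet covu := by
    apply measurableSet_le _ measurable_const
    exact (((by fun_prop : Measurable fun x : Plane => x 0).add measurable_const).pow measurable_const).add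
      (((by fun_prop : Measurable fun x : Plane => x 1).add measurable_const).pow measurable_const)
  have hx1_m : Measurable fun x : Plane => x 1 := (by fun_prop : Measurable fun x : Plane => x 1)
  -- partition of Vg
  set A0 := Vg ∩ {x : Plane | 0 ≤ x 1} with hA0_def
  set A1 := (Vg ∩ {x : Plane | x 1 < 0}) ∩ covu with hA1_def
  set A2 := (((Vg ∩ {x : Plane | x 1 < 0}) ∩ covq) \ covu) with hA2_def
  set A3 := (((Vg ∩ {x : Plane | x 1 < 0}) \ covq) \ covu) with hA3_def
  -- target pieces
  set T0 := (VT ∩ {x : Plane | 0 ≤ x 1}) ∩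
      ({x : Plane | 1 < (x 0 - dl*c)^2 + (x 1 + dl*s)^2} ∩
       {x : Plane | 1 < (x 0 + dl*c)^2 + (x 1 + dl*s)^2}) with hT0_def
  set T1 := (VT ∩ {x : Plane | 0 < x 1}) ∩
      {x : Plane | (x 0 - dl*c)^2 + (x 1 + dl*s)^2 ≤ 1} with hT1_def
  set T2 := ((VT ∩ {x : Plane | 0 < x 1}) ∩
      {x : Plane | (x 0 + dl*c)^2 + (x 1 + dl*s)^2 ≤ 1}) ∩
      {x : Plane | 1 < (x 0 - dl*c)^2 + (x 1 + dl*s)^2} with hT2_def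
  set T3 := VT ∩ {x : Plane | x 1 < 0} with hT3_def
  have hq_m : MeasurableSet {x : Plane | (x 0 - dl*c)^2 + (x 1 + dl*s)^2 ≤ 1} := by
    apply measurableSet_le _ measurable_const
    exact (((by fun_prop : Measurable fun x : Plane => x 0).sub measurable_const).pow measurable_const).add
      (((by fun_prop : Measurable fun x : Plane => x 1).add measurable_const).pow measurable_const)
  have hu_m : MeasurableSet {x : Plane | (x 0 + dl*c)^2 + (x 1 + dl*s)^2 ≤ 1} := by
    apply measurableSet_le _ measurable_const
    exact (((by fun_prop : Measurable fun x : Plane => x 0).add measurable_const).pow measurable_const).add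
      (((by fun_prop : Measurable fun x : Plane => x 1).add measurable_const).pow measurable_const)
  have hqlt_m : MeasurableSet {x : Plane | 1 < (x 0 - dl*c)^2 + (x 1 + dl*s)^2} := by
    apply measurableSet_lt measurable_const
    exact (((by fun_prop : Measurable fun x : Plane => x 0).sub measurable_const).pow measurable_const).add
      (((by fun_prop : Measurable fun x : Plane => x 1).add measurable_const).pow measurable_const)
  have hult_m : MeasurableSet {x : Plane | 1 < (x 0 + dl*c)^2 + (x 1 + dl*s)^2} := by
    apply measurableSet_lt measurable_const
    exact (((by fun_prop : Measurable fun x : Plane => x 0).add measurable_const).pow measurable_const).add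
      (((by fun_prop : Measurable fun x : Plane => x 1).add measurable_const).pow measurable_const)
  have hT0_m : MeasurableSet T0 :=
    ((measurableSet_USET _ _).inter (measurableSet_le measurable_const hx1_m)).inter
      (hqlt_m.inter hult_m)
  have hT1_m : MeasurableSet T1 :=
    ((measurableSet_USET _ _).inter (measurableSet_lt measurable_const hx1_m)).inter hq_m
  have hT2_m : MeasurableSet T2 :=
    (((measurableSet_USET _ _).inter (measurableSet_lt measurable_const hx1_m)).inter hu_m).inter
      hqlt_m
  have hT3_m : MeasurableSet T3 :=
    (measurableSet_USET _ _).inter (measurableSet_lt hx1_m measurable_const)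
  -- cover
  have hcover : Vg ⊆ A0 ∪ (A1 ∪ (A2 ∪ A3)) := by
    intro x hx
    by_cases h1 : 0 ≤ x 1
    · exact Or.inl ⟨hx, h1⟩
    · push_neg at h1
      by_cases h2 : x ∈ covu
      · exact Or.inr (Or.inl ⟨⟨hx, h1⟩, h2⟩)
      · by_cases h3 : x ∈ covq
        · exact Or.inr (Or.inr (Or.inl ⟨⟨⟨hx, h1⟩, h3⟩, h2⟩))
        · exact Or.inr (Or.inr (Or.inr ⟨⟨⟨hx, h1⟩, h3⟩, h2⟩))
  -- pointwise inclusions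
  have hA0T0 : A0 ⊆ T0 := by
    rintro x ⟨hx, hx1⟩
    obtain ⟨hball, hqx, hux⟩ := (hmemVg x).1 hx
    obtain ⟨g1, g2⟩ := coreL0 hd0 hdl hcs hCS hs0 hS0 hs_half hS_half hsS hCc hc1 hC1 hc9 hC9
      hball hqx hux hx1
    exact ⟨⟨(hmemVT x).2 ⟨hball, g1, g2⟩, hx1⟩, hqx, hux⟩
  have hA1T1 : A1 ⊆ (rot w1) ⁻¹' T1 := by
    rintro x ⟨⟨hx, hx1⟩, hcu⟩
    obtain ⟨hball, hqx, hux⟩ := (hmemVg x).1 hx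
    have hz0 : (rot w1 x) 0 = -(C*c - S*s)*(x 0) - (S*c + C*s)*(x 1) := by
      rw [rot_apply_zero, hw1c, hw1s]; try ring
    have hz1 : (rot w1 x) 1 = (S*c + C*s)*(x 0) - (C*c - S*s)*(x 1) := by
      rw [rot_apply_one, hw1c, hw1s]; try ring
    obtain ⟨g0, ⟨g1, g2⟩, g3, g4⟩ := coreL1 hd0 hdl hcs hCS hs0 hS0 hs_half hS_half hc1 hC1
      hc9 hC9 hz0 hz1 hball hqx hux hx1 hcu
    exact ⟨⟨(hmemVT _).2 ⟨g0, g1, g2⟩, g4⟩, g3⟩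
  have hA2T2 : A2 ⊆ (rot w2) ⁻¹' T2 := by
    rintro x ⟨⟨⟨hx, hx1⟩, hcq⟩, hncu⟩
    obtain ⟨hball, hqx, hux⟩ := (hmemVg x).1 hx
    have hz0 : (rot w2 x) 0 = -(C*c - S*s)*(x 0) + (S*c + C*s)*(x 1) := by
      rw [rot_apply_zero, hw2c, hw2s]; try ring
    have hz1 : (rot w2 x) 1 = -(S*c + C*s)*(x 0) - (C*c - S*s)*(x 1) := by
      rw [rot_apply_one, hw2c, hw2s]; try ring
    obtain ⟨g0, ⟨g1, g2⟩, g3, g4, g5⟩ := coreL2 hd0 hdl hcs hCS hs0 hS0 hs_half hS_half hsS hCc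
      hc1 hC1 hc9 hC9 hz0 hz1 hball hqx hux hx1 hcq
    exact ⟨⟨⟨(hmemVT _).2 ⟨g0, g1, g2⟩, g5⟩, g3⟩, g4⟩
  have hA3T3 : A3 ⊆ T3 := by
    rintro x ⟨⟨⟨hx, hx1⟩, hncq⟩, hncu⟩
    obtain ⟨hball, hqx, hux⟩ := (hmemVg x).1 hx
    rw [hcovq_def, Set.mem_setOf_eq, not_le] at hncq
    rw [hcovu_def, Set.mem_setOf_eq, not_le] at hncu
    exact ⟨(hmemVT x).2 ⟨hball, hncq, hncu⟩, hx1⟩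
  -- disjointness of targets
  have hd01 : Disjoint T0 T1 := by
    rw [Set.disjoint_left]
    rintro x ⟨_, hq1, _⟩ ⟨_, hq2⟩
    simp only [Set.mem_setOf_eq] at hq1 hq2
    linarith
  have hd01_2 : Disjoint (T0 ∪ T1) T2 := by
    rw [Set.disjoint_left]
    rintro x hx ⟨⟨_, hu2⟩, hq2⟩
    simp only [Set.mem_setOf_eq] at hu2 hq2
    rcases hx with ⟨_, _, hu1⟩ | ⟨_, hq1⟩
    · simp only [Set.mem_setOf_eq] at hu1; linarith
    · simp only [Set.mem_setOf_eq] at hq1; linarith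
  have hd012_3 : Disjoint ((T0 ∪ T1) ∪ T2) T3 := by
    rw [Set.disjoint_left]
    rintro x hx ⟨_, hlo⟩
    simp only [Set.mem_setOf_eq] at hlo
    have : 0 ≤ x 1 := by
      rcases hx with (⟨⟨_, h⟩, _⟩ | ⟨⟨_, h⟩, _⟩) | ⟨⟨⟨_, h⟩, _⟩, _⟩
      · exact h
      · simp only [Set.mem_setOf_eq] at h; exact h.le
      · simp only [Set.mem_setOf_eq] at h; exact h.le
    linarith
  -- measure chain
  have hsum : volume T0 + volume T1 + volume T2 + volume T3 ≤ volume VT := by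
    rw [← measure_union hd01 hT1_m, ← measure_union hd01_2 hT2_m, ← measure_union hd012_3 hT3_m]
    apply measure_mono
    intro x hx
    rcases hx with ((h | h) | h) | h
    · exact h.1.1
    · exact h.1.1
    · exact h.1.1.1
    · exact h.1
  calc volume Vg ≤ volume (A0 ∪ (A1 ∪ (A2 ∪ A3))) := measure_mono hcover
    _ ≤ volume A0 + volume (A1 ∪ (A2 ∪ A3)) := measure_union_le _ _
    _ ≤ volume A0 + (volume A1 + volume (A2 ∪ A3)) :=
        add_le_add_right (measure_union_le _ _) _
    _ ≤ volume A0 + (volume A1 + (volume A2 + volume A3)) :=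
        add_le_add_right (add_le_add_right (measure_union_le _ _) _) _
    _ ≤ volume T0 + (volume T1 + (volume T2 + volume T3)) := by
        have h0 : volume A0 ≤ volume T0 := measure_mono hA0T0
        have h1 : volume A1 ≤ volume T1 := by
          calc volume A1 ≤ volume ((rot w1) ⁻¹' T1) := measure_mono hA1T1
            _ = volume T1 := ((rot w1).measurePreserving).measure_preimage
                hT1_m.nullMeasurableSet
        have h2 : volume A2 ≤ volume T2 := by
          calc volume A2 ≤ volume ((rot w2) ⁻¹' T2) := measure_mono hA2T2
            _ = volume T2 := ((rot w2).measurePreserving).measure_preimage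
                hT2_m.nullMeasurableSet
        have h3 : volume A3 ≤ volume T3 := measure_mono hA3T3
        exact add_le_add h0 (add_le_add h1 (add_le_add h2 h3))
    _ ≤ volume VT := by
        calc volume T0 + (volume T1 + (volume T2 + volume T3))
            = volume T0 + volume T1 + volume T2 + volume T3 := by ring
          _ ≤ volume VT := hsum


lemma vol_box (A B : Set ℝ) (hA : MeasurableSet A) (hB : MeasurableSet B) :
    volume {x : Plane | x 0 ∈ A ∧ x 1 ∈ B} = volume A * volume B := by
  have hps : MeasurableSet (Set.univ.pi fun i : Fin 2 => if i = 0 then A else B) := by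
    apply MeasurableSet.univ_pi
    intro i
    fin_cases i <;> simp [hA, hB]
  have hpre : ((MeasurableEquiv.toLp 2 (Fin 2 → ℝ)).symm) ⁻¹'
      (Set.univ.pi fun i : Fin 2 => if i = 0 then A else B)
      = {x : Plane | x 0 ∈ A ∧ x 1 ∈ B} := by
    ext x
    simp [Set.mem_pi, Fin.forall_fin_two]
  rw [← hpre,
    (EuclideanSpace.volume_preserving_symm_measurableEquiv_toLp (Fin 2)).measure_preimage
      hps.nullMeasurableSet,
    volume_pi_pi, Fin.prod_univ_two]
  norm_num

lemma part2_box {dl Θ : ℝ} (hΘ0 : 0 < Θ) (hΘd : Θ ≤ dl) (hdl : dl ≤ 1/10) :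
    volume (USET (dl • dir (-(Θ/2))) (dl • dir (Θ/2 + π))) ≤ ENNReal.ofReal (30*dl^3) := by
  have hd0 : 0 < dl := lt_of_lt_of_le hΘ0 hΘd
  set C := Real.cos (Θ/2) with hC_def
  set S := Real.sin (Θ/2) with hS_def
  have hCS : C^2 + S^2 = 1 := by rw [hC_def, hS_def]; exact Real.cos_sq_add_sin_sq _
  have hS0 : 0 ≤ S := Real.sin_nonneg_of_nonneg_of_le_pi (by linarith)
    (by nlinarith [Real.pi_gt_three])
  have hS_half : S ≤ dl/2 := le_trans (Real.sin_le (by linarith)) (by linarith)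
  have hC9 : 9/10 ≤ C := by
    have := Real.one_sub_sq_div_two_le_cos (x := Θ/2)
    rw [← hC_def] at this
    nlinarith
  set B1 : Set Plane :=
    {x | x 0 ∈ Icc (-(5/4*dl)) (5/4*dl) ∧ x 1 ∈ Icc (1-6*dl^2) 1} with hB1_def
  set B2 : Set Plane :=
    {x | x 0 ∈ Icc (-(5/4*dl)) (5/4*dl) ∧ x 1 ∈ Icc (-1) (-(1-6*dl^2))} with hB2_def
  have hsub : USET (dl • dir (-(Θ/2))) (dl • dir (Θ/2 + π)) ⊆ B1 ∪ B2 := by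
    intro x hx
    obtain ⟨hball, hqx, hux⟩ := (mem_USET_sym_iff dl Θ x).1 hx
    obtain ⟨hx0, hx12⟩ := coreG hd0 hdl hCS hS0 hS_half hC9 hball hqx hux
    have hx0' := abs_le.1 hx0
    have hx1a : x 1 ≤ 1 := by nlinarith
    have hx1b : -1 ≤ x 1 := by nlinarith
    rcases le_or_gt 0 (x 1) with h | h
    · left
      refine ⟨⟨hx0'.1, hx0'.2⟩, ⟨?_, hx1a⟩⟩
      nlinarith
    · right
      refine ⟨⟨hx0'.1, hx0'.2⟩, ⟨hx1b, ?_⟩⟩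
      nlinarith
  have hb1vol : volume B1 ≤ ENNReal.ofReal (15*dl^3) := by
    rw [hB1_def, vol_box _ _ measurableSet_Icc measurableSet_Icc, Real.volume_Icc,
      Real.volume_Icc, ← ENNReal.ofReal_mul (by linarith)]
    apply ENNReal.ofReal_le_ofReal
    nlinarith
  have hb2vol : volume B2 ≤ ENNReal.ofReal (15*dl^3) := by
    rw [hB2_def, vol_box _ _ measurableSet_Icc measurableSet_Icc, Real.volume_Icc,
      Real.volume_Icc, ← ENNReal.ofReal_mul (by linarith)]
    apply ENNReal.ofReal_le_ofReal
    nlinarith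
  calc volume (USET (dl • dir (-(Θ/2))) (dl • dir (Θ/2 + π)))
      ≤ volume (B1 ∪ B2) := measure_mono hsub
    _ ≤ volume B1 + volume B2 := measure_union_le _ _
    _ ≤ ENNReal.ofReal (15*dl^3) + ENNReal.ofReal (15*dl^3) := add_le_add hb1vol hb2vol
    _ = ENNReal.ofReal (30*dl^3) := by
        rw [← ENNReal.ofReal_add (by positivity) (by positivity)]
        congr 1
        ring


lemma radius_mono {o x v : Plane} (hv : ‖v‖ = 1) {r dl : ℝ} (hr : 0 < r) (hrd : r ≤ dl)
    (hx : dist x o ≤ 1) (h : 1 < dist x (o + r • v)) : 1 < dist x (o + dl • v) := by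
  rw [dist_eq_norm] at hx h ⊢
  have e1 : x - (o + r • v) = (x - o) - r • v := by abel
  have e2 : x - (o + dl • v) = (x - o) - dl • v := by abel
  rw [e1] at h
  rw [e2]
  set y := x - o with hy
  set t : ℝ := inner ℝ y v with ht
  have hn1 : ‖y - r • v‖^2 = ‖y‖^2 - 2*(r*t) + r^2 := by
    rw [norm_sub_sq_real, real_inner_smul_right, norm_smul, Real.norm_eq_abs,
      abs_of_pos hr, hv]
    ring
  have hn2 : ‖y - dl • v‖^2 = ‖y‖^2 - 2*(dl*t) + dl^2 := by
    rw [norm_sub_sq_real, real_inner_smul_right, norm_smul, Real.norm_eq_abs,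
      abs_of_pos (lt_of_lt_of_le hr hrd), hv]
    ring
  have hsq : 1 < ‖y - r • v‖^2 := by nlinarith [norm_nonneg (y - r • v)]
  have hyle : ‖y‖^2 ≤ 1 := by nlinarith [norm_nonneg y]
  have ht2 : 2*r*t < r^2 := by nlinarith
  have htr : t < r/2 :=
    lt_of_mul_lt_mul_left (by nlinarith : (2*r)*t < (2*r)*(r/2)) (by linarith)
  have hfac : 0 ≤ (dl - r)*(dl + r - 2*t) :=
    mul_nonneg (by linarith) (by linarith)
  have : 1 < ‖y - dl • v‖^2 := by nlinarith
  nlinarith [norm_nonneg (y - dl • v)]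

lemma radius_step (o : Plane) {dl r s' : ℝ} (θ ψ : ℝ)
    (hr : 0 < r) (hrd : r ≤ dl) (hs : 0 < s') (hsd : s' ≤ dl) :
    D o 1 \ (D (o + r • dir θ) 1 ∪ D (o + s' • dir ψ) 1) ⊆
    D o 1 \ (D (o + dl • dir θ) 1 ∪ D (o + dl • dir ψ) 1) := by
  intro x hx
  obtain ⟨h1, h2⟩ := hx
  rw [Set.mem_union, D, D, Metric.mem_closedBall, Metric.mem_closedBall, not_or,
    not_le, not_le] at h2
  refine ⟨h1, ?_⟩
  rw [Set.mem_union, D, D, Metric.mem_closedBall, Metric.mem_closedBall, not_or,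
    not_le, not_le]
  have hxo : dist x o ≤ 1 := h1
  constructor
  · exact radius_mono (norm_dir θ) hr hrd hxo h2.1
  · exact radius_mono (norm_dir ψ) hs hsd hxo h2.2


end R2Aux

open R2Aux

/-- There is a constant `C > 0` (independent of `b`, `o`, `i`) such that for all
sufficiently large `b > 1`, every `0 ≤ i < L`, and all `q ∈ Q_i`, `u ∈ R_i`:
`X(q,u) ≤ X(q̃_i, ũ_i) ≤ C / (b (log b)³)`. -/
theorem rule2_geometric_lemma :
    ∃ C > (0 : ℝ), ∃ b₀ : ℝ, 1 < b₀ ∧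
      ∀ b : ℝ, b₀ ≤ b → ∀ o : Plane, ∀ i : ℕ, i < L b →
        ∀ q ∈ Qsector o b i, ∀ u ∈ Rsector o b i,
          X o q u ≤ X o (qtil o b i) (util o b i) ∧
          X o (qtil o b i) (util o b i) ≤ C / (b * (Real.log b) ^ 3) := by
  refine ⟨30, by norm_num, Real.exp 30, by nlinarith [Real.add_one_le_exp (30:ℝ)], ?_⟩
  intro b hb o i _ q hq u hu
  obtain ⟨r, θ, hr0, hrd, hθ1, hθ2, rfl⟩ := hq
  obtain ⟨s', ψu, hs0, hsd, hψ1, hψ2, rfl⟩ := hu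
  -- basic asymptotics
  have hb1 : (1:ℝ) < b := lt_of_lt_of_le (by nlinarith [Real.add_one_le_exp (30:ℝ)]) hb
  have hb0 : (0:ℝ) < b := by linarith
  have hlog : 30 ≤ Real.log b := by
    have h := Real.log_le_log (Real.exp_pos 30) hb
    rwa [Real.log_exp] at h
  have hA1 : 1 ≤ b ^ (1/3:ℝ) := Real.one_le_rpow hb1.le (by norm_num)
  set A := b ^ (1/3:ℝ) with hA_def
  set l := Real.log b with hl_def
  set dl := δ b with hdl_def
  have hdl_eq : dl = 1 / (A * l) := rfl
  have hAl : 30 ≤ A * l := by nlinarith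
  have hdl0 : 0 < dl := by rw [hdl_eq]; positivity
  have hdl10 : dl ≤ 1/10 := by
    rw [hdl_eq]
    rw [div_le_div_iff₀ (by linarith) (by norm_num)]
    linarith
  have hL1 : 1 ≤ L b := by
    apply Nat.le_floor
    push_cast
    nlinarith
  have hL0 : (0:ℝ) < (L b : ℝ) := by exact_mod_cast hL1
  set Θ := θb b with hΘ_def
  have hΘ_eq : Θ = π / (L b : ℝ) := rfl
  have hΘ0 : 0 < Θ := by rw [hΘ_eq]; exact div_pos Real.pi_pos hL0
  have hΘdl : Θ ≤ dl := by
    rw [hΘ_eq, hdl_eq, div_le_div_iff₀ hL0 (by nlinarith)]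
    have hfloor : A * l^2 - 1 < (L b : ℝ) := by
      have := Nat.sub_one_lt_floor (A * l^2)
      exact_mod_cast this
    have hπ4 : π ≤ 4 := Real.pi_le_four
    nlinarith [Real.pi_pos]
  -- abbreviations for angles
  set α := ((i : ℝ) - 1/2) * Θ with hα_def
  set β := ((i : ℝ) + 1/2) * Θ with hβ_def
  set ψ := ψu - π with hψ_def
  have hβα : β - α = Θ := by rw [hα_def, hβ_def]; ring
  -- volume of the target configuration
  have htgt : volume (D o 1 \ (D (qtil o b i) 1 ∪ D (util o b i) 1))
      = volume (USET (dl • dir (-(Θ/2))) (dl • dir (Θ/2 + π))) := by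
    have h1 : qtil o b i - o = dl • dir α := by
      simp [qtil, polarPt, dir, hα_def]
      try abel
    have h2 : util o b i - o = dl • dir (β + π) := by
      simp [util, polarPt, dir, hβ_def]
      try abel
    rw [vol_diff_eq, h1, h2, vol_USET_rot_dir dl α (β + π) (-((α+β)/2))]
    have e1 : α + -((α+β)/2) = -(Θ/2) := by rw [← hβα]; ring
    have e2 : β + π + -((α+β)/2) = Θ/2 + π := by rw [← hβα]; ring
    rw [e1, e2]
  -- volume inequality for the source configuration
  have hsrc : volume (D o 1 \ (D (polarPt o r θ) 1 ∪ D (polarPt o s' ψu) 1))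
      ≤ volume (USET (dl • dir (-(Θ/2))) (dl • dir (Θ/2 + π))) := by
    have hstep : volume (D o 1 \ (D (polarPt o r θ) 1 ∪ D (polarPt o s' ψu) 1))
        ≤ volume (D o 1 \ (D (o + dl • dir θ) 1 ∪ D (o + dl • dir ψu) 1)) := by
      apply measure_mono
      exact radius_step o θ ψu hr0 hrd hs0 hsd
    refine le_trans hstep ?_
    have h1 : o + dl • dir θ - o = dl • dir θ := by abel
    have h2 : o + dl • dir ψu - o = dl • dir ψu := by abel
    rw [vol_diff_eq, h1, h2]
    have hψu : ψu = ψ + π := by rw [hψ_def]; ring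
    rw [hψu]
    rcases le_or_gt θ ψ with hcase | hcase
    · -- γ := ψ - θ ≥ 0
      set γ := ψ - θ with hγ_def
      have hγΘ : γ ≤ Θ := by
        have h3 : ψ ≤ β := by rw [hβ_def]; exact hψ2
        have h4 : α ≤ θ := by rw [hα_def]; exact hθ1
        linarith [hβα]
      rw [vol_USET_rot_dir dl θ (ψ + π) (-((θ+ψ)/2))]
      have e1 : θ + -((θ+ψ)/2) = -(γ/2) := by rw [hγ_def]; ring
      have e2 : ψ + π + -((θ+ψ)/2) = γ/2 + π := by rw [hγ_def]; ring
      rw [e1, e2]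
      exact main_vol hΘ0 hΘdl hdl10 (by linarith) hγΘ
    · -- γ := θ - ψ > 0, swap roles
      set γ := θ - ψ with hγ_def
      have hγΘ : γ ≤ Θ := by
        have h3 : θ ≤ β := by rw [hβ_def]; exact hθ2
        have h4 : α ≤ ψ := by rw [hα_def]; exact hψ1
        linarith [hβα]
      rw [USET_comm, vol_USET_rot_dir dl (ψ + π) θ (π - (θ+ψ)/2)]
      have e1 : ψ + π + (π - (θ+ψ)/2) = -(γ/2) + 2*π := by rw [hγ_def]; ring
      have e2 : θ + (π - (θ+ψ)/2) = γ/2 + π := by rw [hγ_def]; ring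
      rw [e1, e2, dir_add_two_pi]
      exact main_vol hΘ0 hΘdl hdl10 (by linarith) hγΘ
  -- finiteness
  have hfin : volume (D o 1 \ (D (qtil o b i) 1 ∪ D (util o b i) 1)) ≠ ⊤ := by
    refine ((measure_mono (Set.diff_subset)).trans_lt ?_).ne
    exact measure_closedBall_lt_top
  have hfin2 : volume (D o 1 \ (D (polarPt o r θ) 1 ∪ D (polarPt o s' ψu) 1)) ≠ ⊤ := by
    refine ((measure_mono (Set.diff_subset)).trans_lt ?_).ne
    exact measure_closedBall_lt_top
  constructor
  · -- first inequality
    apply (ENNReal.toReal_le_toReal hfin2 hfin).2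
    rw [htgt]
    exact hsrc
  · -- second inequality
    have hbound := part2_box hΘ0 hΘdl hdl10
    have hXle : X o (qtil o b i) (util o b i) ≤ 30 * dl^3 := by
      unfold X
      apply ENNReal.toReal_le_of_le_ofReal (by positivity)
      rw [htgt]
      exact hbound
    have hA3 : A^(3:ℕ) = b := by
      rw [hA_def, ← Real.rpow_natCast (b ^ (1/3:ℝ)) 3, ← Real.rpow_mul hb0.le]
      norm_num
    have hdl3 : dl^3 = 1 / (b * l^3) := by
      rw [hdl_eq, div_pow, one_pow, mul_pow, hA3]
    have : (30:ℝ) * dl^3 = 30 / (b * Real.log b ^ 3) := by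
      rw [hdl3, hl_def]
      ring
    linarith [hXle, this.le]
end
end

section
/- Let o, q₁, q₂, u₁, u₂ be points of the closed unit disk D₁(o) such that q₁ lies on the line segment from o to q₂ and u₁ lies on the line segment from o to u₂. Then X(q₂,u₂) ≥ X(q₁,u₁), i.e. the area of D₁(o) not covered by D₁(q₂) ∪ D₁(u₂) is at least the area of D₁(o) not covered by D₁(q₁) ∪ D₁(u₁). -/
open MeasureTheory Real Set
open scoped ENNReal

noncomputable section

private lemma miss_mono (o a b x : Plane) (h : a ∈ segment ℝ o b)
    (hx : x ∈ D o 1) (hxa : x ∉ D a 1) : x ∉ D b 1 := by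
  intro hxb
  apply hxa
  have hsub : segment ℝ o b ⊆ Metric.closedBall x 1 :=
    (convex_closedBall x 1).segment_subset
      (by simpa [D, dist_comm] using hx) (by simpa [D, dist_comm] using hxb)
  simpa [D, dist_comm] using hsub h

/-- Moving the two covering centers radially outward (within `D₁(o)`) can only
increase the omitted area: if `q₁ ∈ [o, q₂]` and `u₁ ∈ [o, u₂]` then `X(q₁,u₁) ≤ X(q₂,u₂)`. -/
theorem omitted_area_mono_radial (o q₁ q₂ u₁ u₂ : Plane)
    (hq₁ : q₁ ∈ D o 1) (hq₂ : q₂ ∈ D o 1) (hu₁ : u₁ ∈ D o 1) (hu₂ : u₂ ∈ D o 1)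
    (hsegq : q₁ ∈ segment ℝ o q₂) (hsegu : u₁ ∈ segment ℝ o u₂) :
    X o q₁ u₁ ≤ X o q₂ u₂ := by
  have hsub : D o 1 \ (D q₁ 1 ∪ D u₁ 1) ⊆ D o 1 \ (D q₂ 1 ∪ D u₂ 1) := by
    rintro x ⟨hxo, hxn⟩
    
    refine ⟨hxo, ?_⟩
    rw [Set.mem_union] at hxn ⊢
    push_neg at hxn ⊢
    exact ⟨miss_mono o q₁ q₂ x hsegq hxo hxn.1, miss_mono o u₁ u₂ x hsegu hxo hxn.2⟩
  have hfin : volume (D o 1 \ (D q₂ 1 ∪ D u₂ 1)) ≠ ⊤ := by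
    refine ne_of_lt (lt_of_le_of_lt (measure_mono Set.diff_subset) ?_)
    exact measure_closedBall_lt_top
  exact ENNReal.toReal_mono hfin (measure_mono hsub)
end
end

section
/- Fix o ∈ ℝ² and 0 < δ < 1. For points p, q on the circle of radius δ centered at o, the omitted area X(p,q) is a decreasing function of the angle ∠p o q: if p₁, q₁, p₂, q₂ all lie at distance exactly δ from o and ∠p₁ o q₁ ≤ ∠p₂ o q₂, then X(p₁,q₁) ≥ X(p₂,q₂). -/
open MeasureTheory Real Set
open scoped ENNReal

noncomputable section

/-!
Translate `o` to the origin and reflect so that `p₁ = p₂ = p`. The reflection `ρ` in the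
perpendicular bisector of `q₁ q₂` fixes `D(o)` and swaps `D(q₁)` and `D(q₂)`, and since
`∠ p o q₁ ≤ ∠ p o q₂` the point `p` lies on the side of `q₁`, so a point on that side is at least
as close to `p` as its mirror image. A point of the `q₂`-omitted region that is not `q₁`-omitted
lies in `D(q₁) \ D(q₂)`, hence on the side of `q₁`, and `ρ` sends it into the `q₁`-omitted region
but not the `q₂`-omitted one. As `ρ` preserves area, `X(p, q₂) ≤ X(p, q₁)`.
-/

open Metric InnerProductGeometry
open scoped RealInnerProductSpace

theorem MeasureTheory.MeasurePreserving.measure_le_of_sdiff_subset_preimage {α : Type*}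
    [MeasurableSpace α] {μ : Measure α} {f : α → α} (hf : MeasurePreserving f μ μ)
    {s t : Set α} (hs : MeasurableSet s) (ht : MeasurableSet t) (hst : s \ t ⊆ f ⁻¹' (t \ s)) :
    μ s ≤ μ t :=
  calc μ s = μ (t ∩ s) + μ (s \ t) := by rw [inter_comm, measure_inter_add_sdiff s ht]
    _ ≤ μ (t ∩ s) + μ (t \ s) := add_le_add_right
      ((measure_mono hst).trans_eq (hf.measure_preimage (ht.diff hs).nullMeasurableSet)) _
    _ = μ t := measure_inter_add_sdiff t hs

section InnerProductSpace

variable {F : Type*} [NormedAddCommGroup F] [InnerProductSpace ℝ F]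

theorem inner_sub_nonneg_of_norm_sub_le {q₁ q₂ x : F} (hq : ‖q₁‖ = ‖q₂‖)
    (hx : ‖x - q₁‖ ≤ ‖x - q₂‖) : 0 ≤ ⟪q₁ - q₂, x⟫ := by
  have hsq := pow_le_pow_left₀ (norm_nonneg _) hx 2
  rw [norm_sub_sq_real, norm_sub_sq_real, hq] at hsq
  rw [inner_sub_left, real_inner_comm x q₁, real_inner_comm x q₂]
  linarith

theorem inner_sub_nonneg_of_angle_le {p q₁ q₂ : F} (hq : ‖q₁‖ = ‖q₂‖)
    (h : angle p q₁ ≤ angle p q₂) : 0 ≤ ⟪q₁ - q₂, p⟫ := by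
  have hcos : Real.cos (angle p q₂) ≤ Real.cos (angle p q₁) :=
    Real.cos_le_cos_of_nonneg_of_le_pi (angle_nonneg _ _) (angle_le_pi _ _) h
  rw [inner_sub_left, real_inner_comm p q₁, real_inner_comm p q₂, sub_nonneg,
    ← cos_angle_mul_norm_mul_norm, ← cos_angle_mul_norm_mul_norm, hq]
  exact mul_le_mul_of_nonneg_right hcos (by positivity)

theorem norm_sub_le_norm_reflection_sub {u p x : F} (hp : 0 ≤ ⟪u, p⟫) (hx : 0 ≤ ⟪u, x⟫) :
    ‖x - p‖ ≤ ‖(ℝ ∙ u)ᗮ.reflection x - p‖ := by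
  set c := 2 * (⟪u, x⟫ / ‖u‖ ^ 2)
  have hc : 0 ≤ c := by positivity
  have hcu : c * ‖u‖ ^ 2 = 2 * ⟪u, x⟫ := by
    rcases eq_or_ne u 0 with rfl | hu
    · simp
    · rw [mul_assoc, div_mul_cancel₀ _ (by positivity)]
  have hR : (ℝ ∙ u)ᗮ.reflection x - p = (x - p) - c • u := by
    rw [Submodule.reflection_orthogonal_apply, Submodule.reflection_singleton_apply]
    simp only [RCLike.ofReal_real_eq_id, id, c]
    module
  rw [← sq_le_sq₀ (norm_nonneg _) (norm_nonneg _), hR, norm_sub_sq_real (x - p), norm_smul,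
    Real.norm_of_nonneg hc, inner_smul_right, inner_sub_left, real_inner_comm u x,
    real_inner_comm u p]
  -- the right side equals `‖x - p‖ ^ 2 + 2 * c * ⟪u, p⟫`
  nlinarith

end InnerProductSpace

def omittedRegion {E : Type*} [PseudoMetricSpace E] (r : ℝ) (o p q : E) : Set E :=
  closedBall o r \ (closedBall p r ∪ closedBall q r)

section omittedRegion

variable {E : Type*}

theorem Isometry.preimage_omittedRegion [PseudoMetricSpace E] {f : E → E} (hf : Isometry f)
    (r : ℝ) (o p q : E) : f ⁻¹' omittedRegion r (f o) (f p) (f q) = omittedRegion r o p q := by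
  simp only [omittedRegion, preimage_sdiff, preimage_union, hf.preimage_closedBall]

theorem measurableSet_omittedRegion [PseudoMetricSpace E] [MeasurableSpace E]
    [OpensMeasurableSpace E] (r : ℝ) (o p q : E) : MeasurableSet (omittedRegion r o p q) :=
  measurableSet_closedBall.diff (measurableSet_closedBall.union measurableSet_closedBall)

variable [NormedAddCommGroup E] [InnerProductSpace ℝ E] [FiniteDimensional ℝ E]
  [MeasurableSpace E] [BorelSpace E]

theorem Isometry.volume_omittedRegion {f : E → E} (hf : Isometry f)
    (hvol : MeasurePreserving f) (r : ℝ) (o p q : E) :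
    volume (omittedRegion r (f o) (f p) (f q)) = volume (omittedRegion r o p q) := by
  rw [← hvol.measure_preimage (measurableSet_omittedRegion r _ _ _).nullMeasurableSet,
    hf.preimage_omittedRegion]

theorem volume_omittedRegion_le_of_angle_le {r : ℝ} {p q₁ q₂ : E} (hq : ‖q₁‖ = ‖q₂‖)
    (h : angle p q₁ ≤ angle p q₂) :
    volume (omittedRegion r 0 p q₂) ≤ volume (omittedRegion r 0 p q₁) := by
  set ρ := (ℝ ∙ (q₁ - q₂))ᗮ.reflection
  have hρq₁ : ρ q₁ = q₂ := Submodule.reflection_sub hq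
  have hρq₂ : ρ q₂ = q₁ := by rw [← hρq₁, Submodule.reflection_reflection]
  have hdist (x y : E) : dist (ρ x) y = dist x (ρ y) := by
    rw [← ρ.dist_map x (ρ y), Submodule.reflection_reflection]
  refine ρ.measurePreserving.measure_le_of_sdiff_subset_preimage
    (measurableSet_omittedRegion _ _ _ _) (measurableSet_omittedRegion _ _ _ _) ?_
  rintro x ⟨⟨hx0, hx₂⟩, hx₁⟩
  simp only [omittedRegion, mem_preimage, mem_sdiff, mem_union, mem_closedBall, not_or, not_le]
    at hx0 hx₂ hx₁ ⊢
  have hxq₁ : dist x q₁ ≤ r := by by_contra! hxq₁; exact hx₁ ⟨hx0, hx₂.1, hxq₁⟩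
  have hxp : dist x p ≤ dist (ρ x) p := by
    simp only [dist_eq_norm]
    exact norm_sub_le_norm_reflection_sub (inner_sub_nonneg_of_angle_le hq h)
      (inner_sub_nonneg_of_norm_sub_le hq (by simpa only [dist_eq_norm] using hxq₁.trans hx₂.2.le))
  refine ⟨⟨?_, hx₂.1.trans_le hxp, ?_⟩, fun ⟨_, _, hρxq₂⟩ => ?_⟩
  · rwa [hdist, map_zero]
  · simpa only [hdist, hρq₁] using hx₂.2
  · rw [hdist, hρq₂] at hρxq₂
    exact hρxq₂.not_ge hxq₁

theorem volume_omittedRegion_le_of_dist_eq_of_angle_le {r : ℝ} {o p₁ q₁ p₂ q₂ : E}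
    (hp : dist p₁ o = dist p₂ o) (hq : dist q₁ o = dist q₂ o)
    (h : EuclideanGeometry.angle p₁ o q₁ ≤ EuclideanGeometry.angle p₂ o q₂) :
    volume (omittedRegion r o p₂ q₂) ≤ volume (omittedRegion r o p₁ q₁) := by
  have htranslate (p q : E) :
      volume (omittedRegion r o p q) = volume (omittedRegion r 0 (p - o) (q - o)) := by
    simpa using ((IsometryEquiv.subRight o).isometry.volume_omittedRegion
      (measurePreserving_sub_right volume o) r o p q).symm
  set L := (ℝ ∙ ((p₂ - o) - (p₁ - o)))ᗮ.reflection
  have hL : L (p₂ - o) = p₁ - o :=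
    Submodule.reflection_sub (by simpa only [dist_eq_norm] using hp.symm)
  have hangle : angle (p₁ - o) (L (q₂ - o)) = EuclideanGeometry.angle p₂ o q₂ := by
    rw [← hL]
    exact L.toLinearIsometry.angle_map _ _
  rw [htranslate, htranslate, ← L.isometry.volume_omittedRegion L.measurePreserving, map_zero,
    hL]
  refine volume_omittedRegion_le_of_angle_le ?_ (hangle ▸ h)
  rw [L.norm_map, ← dist_eq_norm, ← dist_eq_norm, hq]

end omittedRegion

theorem omitted_area_anti_angle_general (o : Plane) (δ : ℝ)
    (p₁ q₁ p₂ q₂ : Plane)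
    (hp₁ : dist p₁ o = δ) (hq₁ : dist q₁ o = δ) (hp₂ : dist p₂ o = δ) (hq₂ : dist q₂ o = δ)
    (hangle : EuclideanGeometry.angle p₁ o q₁ ≤ EuclideanGeometry.angle p₂ o q₂) :
    X o p₂ q₂ ≤ X o p₁ q₁ :=
  ENNReal.toReal_mono ((measure_mono sdiff_subset).trans_lt measure_closedBall_lt_top).ne
    (volume_omittedRegion_le_of_dist_eq_of_angle_le (hp₁.trans hp₂.symm) (hq₁.trans hq₂.symm)
      hangle)

/-- For points on the circle of radius `δ` (`0 < δ < 1`) centered at `o`, the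
omitted area `X(p,q)` is a decreasing function of the angle `∠ p o q`. -/
theorem omitted_area_anti_angle (o : Plane) (δ : ℝ) (hδ0 : 0 < δ) (hδ1 : δ < 1)
    (p₁ q₁ p₂ q₂ : Plane)
    (hp₁ : dist p₁ o = δ) (hq₁ : dist q₁ o = δ) (hp₂ : dist p₂ o = δ) (hq₂ : dist q₂ o = δ)
    (hangle : EuclideanGeometry.angle p₁ o q₁ ≤ EuclideanGeometry.angle p₂ o q₂) :
    X o p₂ q₂ ≤ X o p₁ q₁ :=
  omitted_area_anti_angle_general o δ p₁ q₁ p₂ q₂ hp₁ hq₁ hp₂ hq₂ hangle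
end
end

section
/- There exist a constant C > 0 and b₀ > 1 such that for all b ≥ b₀ and uniformly for all indices 0 ≤ i < L, the omitted area at the extreme points satisfies X(q̃_i, ũ_i) ≤ C/(b·(log b)³). -/
/-!
Rotating by `iθ_b` about `o` and translating `o` to the origin is a measure-preserving isometry,
so `X(q̃_i, ũ_i)` equals the omitted area for the unit disk at `0` and the centres
`δ(cos φ, -sin φ)`, `δ(-cos φ, -sin φ)` with `φ = θ_b/2`; in particular it does not depend on
`i`. Since `θ_b ≤ δ`, these centres are nearly antipodal, and a point `(x, y)` of the unit disk
outside both of the other disks has `|x| ≤ 2δ` and `1 - 6δ² ≤ |y| ≤ 1`. The omitted region thus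
lies in two boxes of total area `48δ³ = 48 / (b (log b)³)`.
-/

open MeasureTheory Real Set
open scoped ENNReal

noncomputable section

def planeRotation (ψ : ℝ) : Plane ≃ₗᵢ[ℝ] Plane :=
  Complex.orthonormalBasisOneI.repr.symm.trans
    ((rotation (Circle.exp ψ)).trans Complex.orthonormalBasisOneI.repr)

lemma planeRotation_pt_cos_sin (ψ φ : ℝ) :
    planeRotation ψ (pt (cos φ) (sin φ)) = pt (cos (ψ + φ)) (sin (ψ + φ)) := by
  ext j
  fin_cases j <;>
    simp [planeRotation, Complex.orthonormalBasisOneI_repr_symm_apply, pt, Circle.coe_exp,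
      Complex.exp_mul_I, cos_add, sin_add, ← Complex.ofReal_cos, ← Complex.ofReal_sin, add_comm]

lemma X_isometryEquiv_apply (f : Plane ≃ᵢ Plane) (hf : MeasurePreserving f) (o q u : Plane) :
    X (f o) (f q) (f u) = X o q u := by
  have hS : MeasurableSet (D (f o) 1 \ (D (f q) 1 ∪ D (f u) 1)) :=
    measurableSet_closedBall.diff (measurableSet_closedBall.union measurableSet_closedBall)
  rw [X, X, ← hf.measure_preimage hS.nullMeasurableSet]
  simp only [D, preimage_sdiff, preimage_union, f.preimage_closedBall, f.symm_apply_apply]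

lemma X_qtil_util (o : Plane) (b : ℝ) (i : ℕ) :
    X o (qtil o b i) (util o b i)
      = X 0 (polarPt 0 (δ b) (-(θb b / 2))) (polarPt 0 (δ b) (θb b / 2 + π)) := by
  let f : Plane ≃ᵢ Plane :=
    (planeRotation (i * θb b)).toIsometryEquiv.trans (IsometryEquiv.addLeft o)
  have hf : MeasurePreserving f :=
    (measurePreserving_add_left volume o).comp (planeRotation _).measurePreserving
  have hpolar (φ : ℝ) : f (polarPt 0 (δ b) φ) = polarPt o (δ b) (i * θb b + φ) := by
    simp [f, polarPt, planeRotation_pt_cos_sin]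
  rw [← X_isometryEquiv_apply f hf 0, hpolar, hpolar, qtil, util]
  congr 2
  · simp [f]
  · ring_nf
  · ring_nf

lemma abs_le_and_le_abs_of_outside_two_circles {x y a b r : ℝ} (hr : 0 ≤ r) (ha : r / 2 ≤ a)
    (hb₀ : 0 ≤ b) (hb : b ≤ r ^ 2 / 2) (hab : a ^ 2 + b ^ 2 = r ^ 2)
    (hxy : x ^ 2 + y ^ 2 ≤ 1) (h₁ : 1 < (x - a) ^ 2 + (y + b) ^ 2)
    (h₂ : 1 < (x + a) ^ 2 + (y + b) ^ 2) :
    |x| ≤ 2 * r ∧ 1 - 6 * r ^ 2 ≤ |y| ∧ |y| ≤ 1 := by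
  -- the circle centred on the same side as `(x, y)` gives the sharper bound
  have h : 1 < x ^ 2 + y ^ 2 - 2 * (a * |x|) + 2 * (b * y) + r ^ 2 := by
    rcases abs_cases x with ⟨hx, -⟩ | ⟨hx, -⟩ <;> rw [hx] <;> linarith
  have hy : |y| ≤ 1 := abs_le.mpr ⟨by nlinarith, by nlinarith⟩
  have hby : b * y ≤ b := mul_le_of_le_one_right hb₀ (abs_le.mp hy).2
  have hax₀ : 0 ≤ a * |x| := mul_nonneg (by linarith) (abs_nonneg x)
  have hax : a * |x| < r ^ 2 := by linarith
  have hx : |x| ≤ 2 * r := by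
    by_contra! hx
    have := mul_le_mul_of_nonneg_right ha (abs_nonneg x)
    nlinarith
  have hx2 : x ^ 2 ≤ 4 * r ^ 2 := by
    have := pow_le_pow_left₀ (abs_nonneg x) hx 2
    rw [sq_abs] at this
    linarith
  have hy2 : 1 - 6 * r ^ 2 < |y| ^ 2 := by rw [sq_abs]; linarith
  have hyy : |y| ^ 2 ≤ |y| := by
    rw [sq]; exact mul_le_of_le_one_left (abs_nonneg y) hy
  exact ⟨hx, by linarith, hy⟩

lemma volume_coord_setOf (A B : Set ℝ) :
    volume {z : Plane | z 0 ∈ A ∧ z 1 ∈ B} = volume A * volume B := by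
  have h : {z : Plane | z 0 ∈ A ∧ z 1 ∈ B}
      = (MeasurableEquiv.toLp 2 (Fin 2 → ℝ)).symm ⁻¹' univ.pi ![A, B] := by
    ext z
    simp [Fin.forall_fin_two]
  rw [h,
    (EuclideanSpace.volume_preserving_symm_measurableEquiv_toLp (Fin 2)).measure_preimage_equiv,
    volume_pi_pi, Fin.prod_univ_two]
  rfl

lemma dist_sq_eq (p q : Plane) : dist p q ^ 2 = (p 0 - q 0) ^ 2 + (p 1 - q 1) ^ 2 := by
  rw [EuclideanSpace.dist_eq, sq_sqrt (by positivity)]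
  simp [Fin.sum_univ_two, Real.dist_eq, sq_abs]

lemma closedBall_sdiff_polarPt_subset {r φ : ℝ} (hφ₀ : 0 ≤ φ) (hφ : φ ≤ r / 2) (hr : r ≤ 2) :
    D 0 1 \ (D (polarPt 0 r (-φ)) 1 ∪ D (polarPt 0 r (φ + π)) 1)
      ⊆ {z : Plane | z 0 ∈ Icc (-(2 * r)) (2 * r) ∧
          z 1 ∈ Icc (1 - 6 * r ^ 2) 1 ∪ Icc (-1) (-(1 - 6 * r ^ 2))} := by
  have hr₀ : 0 ≤ r := by linarith
  have hcos : 1 / 2 ≤ cos φ := by nlinarith [one_sub_sq_div_two_le_cos (x := φ)]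
  have hsin₀ : 0 ≤ sin φ := sin_nonneg_of_nonneg_of_le_pi hφ₀ (by linarith [pi_gt_three])
  have hsin : r * sin φ ≤ r ^ 2 / 2 := by nlinarith [sin_le hφ₀]
  rintro z ⟨hz, hzq⟩
  simp only [D, mem_union, not_or, Metric.mem_closedBall, not_le] at hz hzq
  obtain ⟨h₁, h₂⟩ := hzq
  rw [← one_lt_sq_iff₀ dist_nonneg, dist_sq_eq] at h₁ h₂
  simp only [polarPt, pt, cos_neg, sin_neg, WithLp.equiv_symm_apply, zero_add,
    PiLp.smul_apply, Matrix.cons_val_zero, smul_eq_mul, Matrix.cons_val_one,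
    Matrix.cons_val_fin_one, mul_neg, sub_neg_eq_add, cos_add_pi, sin_add_pi] at h₁ h₂
  have hz : z 0 ^ 2 + z 1 ^ 2 ≤ 1 := by
    have h := pow_le_one₀ (n := 2) dist_nonneg hz
    rw [dist_sq_eq] at h
    simpa using h
  obtain ⟨hx, hy₁, hy₂⟩ := abs_le_and_le_abs_of_outside_two_circles hr₀
    (by nlinarith) (mul_nonneg hr₀ hsin₀) hsin
    (by rw [mul_pow, mul_pow, ← mul_add, cos_sq_add_sin_sq, mul_one]) hz h₁ h₂
  refine ⟨abs_le.mp hx, ?_⟩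
  rcases le_abs'.mp hy₁ with hy | hy
  · exact Or.inr ⟨(abs_le.mp hy₂).1, by linarith⟩
  · exact Or.inl ⟨hy, (abs_le.mp hy₂).2⟩

lemma X_polarPt_neg_polarPt_add_pi_le {r φ : ℝ} (hφ₀ : 0 ≤ φ) (hφ : φ ≤ r / 2) (hr : r ≤ 2) :
    X 0 (polarPt 0 r (-φ)) (polarPt 0 r (φ + π)) ≤ 48 * r ^ 3 := by
  have hr₀ : 0 ≤ r := by linarith
  refine ENNReal.toReal_le_of_le_ofReal (by positivity)
    ((measure_mono (closedBall_sdiff_polarPt_subset hφ₀ hφ hr)).trans ?_)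
  rw [volume_coord_setOf]
  calc volume (Icc (-(2 * r)) (2 * r))
        * volume (Icc (1 - 6 * r ^ 2) 1 ∪ Icc (-1) (-(1 - 6 * r ^ 2)))
      ≤ ENNReal.ofReal (4 * r) * (ENNReal.ofReal (6 * r ^ 2) + ENNReal.ofReal (6 * r ^ 2)) := by
        gcongr
        · rw [Real.volume_Icc]
          gcongr
          linarith
        · refine (measure_union_le _ _).trans ?_
          rw [Real.volume_Icc, Real.volume_Icc]
          gcongr <;> linarith
    _ = ENNReal.ofReal (48 * r ^ 3) := by
        rw [← ENNReal.ofReal_add (by positivity) (by positivity),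
          ← ENNReal.ofReal_mul (by positivity)]
        ring_nf

lemma δ_pow_three {b : ℝ} (hb : 0 ≤ b) : δ b ^ 3 = 1 / (b * log b ^ 3) := by
  rw [δ, div_pow, one_pow, mul_pow, ← rpow_natCast (b ^ (1 / 3 : ℝ)), ← rpow_mul hb]
  norm_num

lemma four_le_log {b : ℝ} (hb : exp 4 ≤ b) : 4 ≤ log b :=
  (le_log_iff_exp_le ((exp_pos 4).trans_le hb)).mpr hb

lemma four_le_rpow_mul_log {b : ℝ} (hb : exp 4 ≤ b) : 4 ≤ b ^ (1 / 3 : ℝ) * log b := by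
  have hlog := four_le_log hb
  have hrpow : 1 ≤ b ^ (1 / 3 : ℝ) :=
    one_le_rpow (by linarith [add_one_le_exp 4]) (by norm_num)
  nlinarith

lemma δ_le_quarter {b : ℝ} (hb : exp 4 ≤ b) : δ b ≤ 1 / 4 := by
  rw [δ]
  gcongr
  exact four_le_rpow_mul_log hb

lemma θb_le_δ {b : ℝ} (hb : exp 4 ≤ b) : θb b ≤ δ b := by
  set B := b ^ (1 / 3 : ℝ) * log b
  have hB : 4 ≤ B := four_le_rpow_mul_log hb
  have hlog := four_le_log hb
  have hL : π * B ≤ L b := by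
    have hfloor := Nat.lt_floor_add_one (b ^ (1 / 3 : ℝ) * log b ^ 2)
    have hBlog : b ^ (1 / 3 : ℝ) * log b ^ 2 = B * log b := by ring
    have hgap : 0.85 ≤ log b - π := by linarith [pi_lt_d2]
    show π * B ≤ (⌊b ^ (1 / 3 : ℝ) * log b ^ 2⌋₊ : ℝ)
    nlinarith [mul_le_mul hB hgap (by norm_num) (by linarith)]
  calc θb b ≤ π / (π * B) := div_le_div_of_nonneg_left pi_pos.le (by positivity) hL
    _ = δ b := by rw [div_mul_eq_div_div, div_self pi_ne_zero]; rfl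

/-- There are `C > 0` and `b₀ > 1` such that for all `b ≥ b₀` and uniformly for
all `0 ≤ i < L`, the omitted area at the extreme points satisfies
`X(q̃_i, ũ_i) ≤ C / (b (log b)³)`. -/
theorem omitted_area_extreme_bound :
    ∃ C > (0 : ℝ), ∃ b₀ : ℝ, 1 < b₀ ∧
      ∀ b : ℝ, b₀ ≤ b → ∀ o : Plane, ∀ i : ℕ, i < L b →
        X o (qtil o b i) (util o b i) ≤ C / (b * (Real.log b) ^ 3) := by
  refine ⟨48, by norm_num, exp 4, one_lt_exp_iff.mpr (by norm_num), fun b hb o i _ => ?_⟩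
  rw [X_qtil_util, div_eq_mul_one_div (48 : ℝ), ← δ_pow_three ((exp_pos 4).le.trans hb)]
  exact X_polarPt_neg_polarPt_add_pi_le (by unfold θb; positivity)
    (by linarith [θb_le_δ hb]) (by linarith [δ_le_quarter hb])
end
end
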